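/- arXiv:0811.3422 — 3 statements merged into one kernel-verified Lean document; each statement's English description precedes it below -/
import Mathlib

section
/- Let G be a countable group and μ a random forest on G of finite width. Then the function f_μ(g) = μ{F : (1,g) ∈ F} satisfies ‖f_μ‖_{T¹(G)} ≤ 2, where the T¹ norm of a finitely supported f : G → ℂ is the infimum, over all decompositions f(g⁻¹g') = f⁺(g,g') + f⁻(g,g') for all g,g' ∈ G, of sup_g ∑_{g'} |f⁺(g,g')| + sup_g ∑_{g'} |f⁻(g',g)|. -/
open MeasureTheory ENNReal

def forestGraph {G : Type*} (F : G × G → Bool) : SimpleGraph G :=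
  SimpleGraph.fromRel fun a b => F (a, b) = true

def IsForest {G : Type*} (F : G × G → Bool) : Prop :=
  (∀ a b, F (a, b) = F (b, a)) ∧ (∀ a, F (a, a) = false) ∧ (forestGraph F).IsAcyclic

/-- The `T¹`-norm of a function `f : K → ℂ`: the infimum over all decompositions
`f(g⁻¹g') = f⁺(g,g') + f⁻(g,g')` of `sup_g ∑_{g'} |f⁺(g,g')| + sup_g ∑_{g'} |f⁻(g',g)|`. -/
noncomputable def T1norm {K : Type*} [Group K] (f : K → ℂ) : ℝ≥0∞ :=
  ⨅ (d : (K × K → ℂ) × (K × K → ℂ))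
    (_ : ∀ g g' : K, f (g⁻¹ * g') = d.1 (g, g') + d.2 (g, g')),
      (⨆ g : K, ∑' g' : K, ENNReal.ofReal ‖d.1 (g, g')‖) +
      (⨆ g : K, ∑' g' : K, ENNReal.ofReal ‖d.2 (g', g)‖)

/-!
Fix an injection `e : G → ℕ` and root each tree of a forest at its vertex of least `e`-index;
orienting every edge towards the root leaves each vertex with at most one outgoing edge. Put
`f⁺(g, g') = μ{F : g' is the parent of g in F}` and `f⁻(g, g') = f⁺(g', g)`. Then
`∑_{g'} f⁺(g, g') ≤ 1`, both sups in the `T¹`-norm are this same sum, and by `G`-invariance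
`f_μ(g⁻¹g') = μ{F : (g, g') ∈ F} = f⁺(g, g') + f⁻(g, g')`. The events involved are Borel because
paths, reachability and acyclicity can all be expressed through the countably many finite lists
of vertices.
-/

namespace SimpleGraph

variable {V : Type*} {H : SimpleGraph V} {e : V → ℕ} {g g' g₁ g₂ r : V}

/-- `g'` is the second vertex of a path from `g` to `r`. -/
def IsStepToward (H : SimpleGraph V) (r g g' : V) : Prop :=
  H.Adj g g' ∧ ∃ p : H.Walk g' r, p.IsPath ∧ g ∉ p.support

theorem IsAcyclic.isStepToward_or (hH : H.IsAcyclic) (hadj : H.Adj g g') (hr : H.Reachable g r) :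
    H.IsStepToward r g g' ∨ H.IsStepToward r g' g := by
  obtain ⟨p, hp⟩ := hr.exists_isPath
  obtain ⟨q, hq⟩ := (hadj.symm.reachable.trans hr).exists_isPath
  by_cases hg : g ∈ q.support
  · refine .inr ⟨hadj.symm, p, hp, fun hg' => ?_⟩
    exact hH.ne_mem_support_of_support_of_adj_of_isPath hq.reverse hp.reverse hadj.symm
      (by simpa using hg) (by simpa using hg')
  · exact .inl ⟨hadj, q, hq, hg⟩

theorem IsAcyclic.not_isStepToward_and (hH : H.IsAcyclic) :
    ¬(H.IsStepToward r g g' ∧ H.IsStepToward r g' g) := by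
  rintro ⟨⟨hadj, q, hq, hg⟩, ⟨-, p, hp, hg'⟩⟩
  have hpq : Walk.cons hadj q = p :=
    congrArg Subtype.val ((hH.subsingleton_path g r).elim ⟨_, hq.cons hg⟩ ⟨p, hp⟩)
  exact hg' (hpq ▸ by simp)

theorem IsAcyclic.isStepToward_unique (hH : H.IsAcyclic) (h₁ : H.IsStepToward r g g₁)
    (h₂ : H.IsStepToward r g g₂) : g₁ = g₂ := by
  obtain ⟨hadj₁, q₁, hq₁, hg₁⟩ := h₁
  obtain ⟨hadj₂, q₂, hq₂, hg₂⟩ := h₂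
  simpa using congrArg (fun p : H.Path g r => p.1.snd)
    ((hH.subsingleton_path g r).elim ⟨.cons hadj₁ q₁, hq₁.cons hg₁⟩ ⟨.cons hadj₂ q₂, hq₂.cons hg₂⟩)

def IsLeastReachable (H : SimpleGraph V) (e : V → ℕ) (g r : V) : Prop :=
  H.Reachable g r ∧ ∀ u, H.Reachable g u → e r ≤ e u

theorem exists_isLeastReachable (H : SimpleGraph V) (e : V → ℕ) (g : V) :
    ∃ r, H.IsLeastReachable e g r := by
  obtain ⟨r, hr, hmin⟩ := (InvImage.wf e wellFounded_lt).has_min {u | H.Reachable g u} ⟨g, .rfl⟩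
  exact ⟨r, hr, fun u hu => not_lt.1 (hmin u hu)⟩

theorem IsLeastReachable.eq (he : Function.Injective e) {r₁ r₂ : V}
    (h₁ : H.IsLeastReachable e g r₁) (h₂ : H.IsLeastReachable e g r₂) : r₁ = r₂ :=
  he (le_antisymm (h₁.2 _ h₂.1) (h₂.2 _ h₁.1))

theorem Reachable.isLeastReachable_iff (h : H.Reachable g g') :
    H.IsLeastReachable e g r ↔ H.IsLeastReachable e g' r := by
  have hreach : ∀ u, H.Reachable g u ↔ H.Reachable g' u := fun u => ⟨h.symm.trans, h.trans⟩
  simp only [IsLeastReachable, hreach]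

def IsParent (H : SimpleGraph V) (e : V → ℕ) (g g' : V) : Prop :=
  ∃ r, H.IsLeastReachable e g r ∧ H.IsStepToward r g g'

theorem IsParent.adj (h : H.IsParent e g g') : H.Adj g g' :=
  h.choose_spec.2.1

theorem IsAcyclic.isParent_or (hH : H.IsAcyclic) (e : V → ℕ) (hadj : H.Adj g g') :
    H.IsParent e g g' ∨ H.IsParent e g' g := by
  obtain ⟨r, hr⟩ := H.exists_isLeastReachable e g
  rcases hH.isStepToward_or hadj hr.1 with h | h
  · exact .inl ⟨r, hr, h⟩
  · exact .inr ⟨r, hadj.reachable.isLeastReachable_iff.1 hr, h⟩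

theorem IsAcyclic.not_isParent_and (hH : H.IsAcyclic) (he : Function.Injective e) :
    ¬(H.IsParent e g g' ∧ H.IsParent e g' g) := by
  rintro ⟨⟨r, hr, h⟩, ⟨r', hr', h'⟩⟩
  obtain rfl := hr.eq he (h.1.reachable.isLeastReachable_iff.2 hr')
  exact hH.not_isStepToward_and ⟨h, h'⟩

theorem IsAcyclic.isParent_unique (hH : H.IsAcyclic) (he : Function.Injective e)
    (h₁ : H.IsParent e g g₁) (h₂ : H.IsParent e g g₂) : g₁ = g₂ := by
  obtain ⟨r, hr, h₁⟩ := h₁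
  obtain ⟨r', hr', h₂⟩ := h₂
  obtain rfl := hr.eq he hr'
  exact hH.isStepToward_unique h₁ h₂

theorem exists_walk_iff_exists_isChain {u v : V} (P : List V → Prop) :
    (∃ p : H.Walk u v, P p.support) ↔
      ∃ l : List V, l.IsChain H.Adj ∧ l.head? = some u ∧ l.getLast? = some v ∧ P l := by
  constructor
  · rintro ⟨p, hp⟩
    exact ⟨p.support, p.isChain_adj_support, by cases p <;> simp,
      by simp [List.getLast?_eq_some_getLast], hp⟩
  · rintro ⟨l, hl, hu, hv, hP⟩
    have hne : l ≠ [] := by rintro rfl; simp at hu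
    have hu' : l.head hne = u := by simpa [List.head?_eq_some_head hne] using hu
    have hv' : l.getLast hne = v := by simpa [List.getLast?_eq_some_getLast hne] using hv
    exact ⟨(Walk.ofSupport l hne hl).copy hu' hv', by simpa using hP⟩

end SimpleGraph

section Measurability

variable {Ω V : Type*} [MeasurableSpace Ω] [Countable V] {H : Ω → SimpleGraph V}

theorem measurable_isChain (hH : ∀ a b, Measurable fun ω => (H ω).Adj a b) (l : List V) :
    Measurable fun ω => l.IsChain (H ω).Adj := by
  induction l with
  | nil => simp only [List.isChain_nil]; exact measurable_const
  | cons a l ih =>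
    simp only [List.isChain_cons]
    exact .and (.forall fun b => measurable_const.imp (hH a b)) ih

theorem measurable_exists_walk (hH : ∀ a b, Measurable fun ω => (H ω).Adj a b)
    (P : List V → Prop) (u v : V) : Measurable fun ω => ∃ p : (H ω).Walk u v, P p.support := by
  simp only [SimpleGraph.exists_walk_iff_exists_isChain]
  exact .exists fun l => (measurable_isChain hH l).and measurable_const

theorem measurable_reachable (hH : ∀ a b, Measurable fun ω => (H ω).Adj a b) (u v : V) :
    Measurable fun ω => (H ω).Reachable u v := by
  simpa [SimpleGraph.Reachable] using measurable_exists_walk hH (fun _ => True) u v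

theorem measurable_isAcyclic (hH : ∀ a b, Measurable fun ω => (H ω).Adj a b) :
    Measurable fun ω => (H ω).IsAcyclic := by
  simp only [SimpleGraph.isAcyclic_iff_forall_adj_isBridge, SimpleGraph.isBridge_iff]
  refine .forall fun a => .forall fun b => (hH a b).imp (.not ?_)
  refine measurable_reachable (H := fun ω => (H ω).deleteEdges {s(a, b)}) (fun x y => ?_) a b
  simp only [SimpleGraph.deleteEdges_adj]
  exact (hH x y).and measurable_const

theorem measurable_isParent (hH : ∀ a b, Measurable fun ω => (H ω).Adj a b) (e : V → ℕ)
    (g g' : V) : Measurable fun ω => (H ω).IsParent e g g' := by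
  simp only [SimpleGraph.IsParent, SimpleGraph.IsLeastReachable, SimpleGraph.IsStepToward,
    SimpleGraph.Walk.isPath_def]
  refine .exists fun r => .and ?_ ((hH g g').and ?_)
  · exact (measurable_reachable hH g r).and
      (.forall fun u => (measurable_reachable hH g u).imp measurable_const)
  · exact measurable_exists_walk hH (fun l => l.Nodup ∧ g ∉ l) g' r

end Measurability

section RandomForest

variable {G : Type*}

theorem IsForest.adj_iff {F : G × G → Bool} (hF : IsForest F) {a b : G} :
    (forestGraph F).Adj a b ↔ F (a, b) = true := by
  simp only [forestGraph, SimpleGraph.fromRel_adj, hF.1 b a, or_self]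
  refine ⟨And.right, fun h => ⟨?_, h⟩⟩
  rintro rfl
  simp [hF.2.1 a] at h

theorem measurable_forestGraph_adj (a b : G) :
    Measurable fun F : G × G → Bool => (forestGraph F).Adj a b := by
  simp only [forestGraph, SimpleGraph.fromRel_adj]
  fun_prop

theorem measurableSet_isForest [Countable G] : MeasurableSet {F : G × G → Bool | IsForest F} :=
  measurableSet_setOfPred.2 <| .and (by fun_prop) <| .and (by fun_prop) <|
    measurable_isAcyclic measurable_forestGraph_adj

def parentEvent (e : G → ℕ) (g g' : G) : Set (G × G → Bool) :=
  {F | IsForest F ∧ (forestGraph F).IsParent e g g'}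

theorem measurableSet_parentEvent [Countable G] (e : G → ℕ) (g g' : G) :
    MeasurableSet (parentEvent e g g') :=
  measurableSet_isForest.inter <|
    measurableSet_setOfPred.2 (measurable_isParent measurable_forestGraph_adj e g g')

theorem setOf_edge_inter_setOf_isForest (e : G → ℕ) (g g' : G) :
    {F : G × G → Bool | F (g, g') = true} ∩ {F | IsForest F} =
      parentEvent e g g' ∪ parentEvent e g' g := by
  ext F
  simp only [parentEvent, Set.mem_inter_iff, Set.mem_union, Set.mem_ofPred_eq]
  constructor
  · rintro ⟨hE, hF⟩
    exact (hF.2.2.isParent_or e (hF.adj_iff.2 hE)).imp (⟨hF, ·⟩) (⟨hF, ·⟩)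
  · rintro (⟨hF, h⟩ | ⟨hF, h⟩)
    · exact ⟨hF.adj_iff.1 h.adj, hF⟩
    · exact ⟨hF.adj_iff.1 h.adj.symm, hF⟩

variable {e : G → ℕ}

theorem disjoint_parentEvent (he : Function.Injective e) (g g' : G) :
    Disjoint (parentEvent e g g') (parentEvent e g' g) :=
  Set.disjoint_left.2 fun _ h h' => h.1.2.2.not_isParent_and he ⟨h.2, h'.2⟩

theorem pairwise_disjoint_parentEvent (he : Function.Injective e) (g : G) :
    Pairwise fun g₁ g₂ => Disjoint (parentEvent e g g₁) (parentEvent e g g₂) :=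
  fun _ _ hne => Set.disjoint_left.2 fun _ h h' => hne (h.1.2.2.isParent_unique he h.2 h'.2)

variable [Countable G] {μ : Measure (G × G → Bool)} [IsProbabilityMeasure μ]

theorem measure_edge_eq_add (hforest : μ {F | IsForest F} = 1) (he : Function.Injective e)
    (g g' : G) :
    μ {F | F (g, g') = true} = μ (parentEvent e g g') + μ (parentEvent e g' g) := by
  rw [← measure_inter_conull ((prob_compl_eq_zero_iff measurableSet_isForest).2 hforest),
    setOf_edge_inter_setOf_isForest e, measure_union (disjoint_parentEvent he g g')
      (measurableSet_parentEvent e g' g)]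

theorem tsum_measure_parentEvent_le_one (he : Function.Injective e) (g : G) :
    ∑' g', μ (parentEvent e g g') ≤ 1 := by
  rw [← measure_iUnion (pairwise_disjoint_parentEvent he g) (measurableSet_parentEvent e g)]
  exact prob_le_one

end RandomForest

theorem measure_edge_one_inv_mul {G : Type*} [Group G] {μ : Measure (G × G → Bool)}
    (hinv : ∀ g : G,
      Measure.map (fun (F : (G × G) → Bool) (p : G × G) => F (g⁻¹ * p.1, g⁻¹ * p.2)) μ = μ)
    (g g' : G) : μ {F | F (1, g⁻¹ * g') = true} = μ {F | F (g, g') = true} := by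
  conv_lhs => rw [← hinv g⁻¹]
  rw [Measure.map_apply (by fun_prop) (measurableSet_setOfPred.2 (by fun_prop))]
  simp

theorem T1norm_toReal_le_two {K : Type*} [Group K] {m : K → ℝ≥0∞} (w : K → K → ℝ≥0∞)
    (hm : ∀ g g', m (g⁻¹ * g') = w g g' + w g' g) (hw : ∀ g, ∑' g', w g g' ≤ 1) :
    T1norm (fun g => ((m g).toReal : ℂ)) ≤ 2 := by
  have hw_ne_top (g g' : K) : w g g' ≠ ⊤ :=
    ne_top_of_le_ne_top one_ne_top ((ENNReal.le_tsum g').trans (hw g))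
  have hnorm (g g' : K) : ENNReal.ofReal ‖((w g g').toReal : ℂ)‖ = w g g' := by
    rw [Complex.norm_real, Real.norm_of_nonneg toReal_nonneg, ofReal_toReal (hw_ne_top g g')]
  have hsup : (⨆ g, ∑' g', ENNReal.ofReal ‖((w g g').toReal : ℂ)‖) ≤ 1 :=
    iSup_le fun g => by simpa only [hnorm] using hw g
  refine (iInf₂_le (fun p => ((w p.1 p.2).toReal : ℂ), fun p => ((w p.2 p.1).toReal : ℂ))
    fun g g' => ?_).trans ?_
  · dsimp only
    rw [hm, toReal_add (hw_ne_top g g') (hw_ne_top g' g), Complex.ofReal_add]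
  · exact (add_le_add hsup hsup).trans_eq one_add_one_eq_two

theorem stmt3_general {G : Type*} [Group G] [Countable G]
    (μ : Measure ((G × G) → Bool)) [IsProbabilityMeasure μ]
    (hforest : μ {F | IsForest F} = 1)
    (hinv : ∀ g : G,
      Measure.map (fun (F : (G × G) → Bool) (p : G × G) => F (g⁻¹ * p.1, g⁻¹ * p.2)) μ = μ) :
    T1norm (fun g : G => ((μ {F | F (1, g) = true}).toReal : ℂ)) ≤ 2 := by
  obtain ⟨e, he⟩ := Countable.exists_injective_nat G
  refine T1norm_toReal_le_two (fun g g' => μ (parentEvent e g g')) (fun g g' => ?_)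
    (tsum_measure_parentEvent_le_one he)
  rw [measure_edge_one_inv_mul hinv, measure_edge_eq_add hforest he]

/-- for a random forest `μ` of finite width on a countable group `G`, the
function `f_μ(g) = μ{F : (1,g) ∈ F}` satisfies `‖f_μ‖_{T¹(G)} ≤ 2`. -/
theorem stmt3 {G : Type*} [Group G] [Countable G]
    (μ : Measure ((G × G) → Bool)) [IsProbabilityMeasure μ]
    (hforest : μ {F | IsForest F} = 1)
    (hinv : ∀ g : G,
      Measure.map (fun (F : (G × G) → Bool) (p : G × G) => F (g⁻¹ * p.1, g⁻¹ * p.2)) μ = μ)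
    (hwidth : {g : G | μ {F | F (1, g) = true} ≠ 0}.Finite) :
    T1norm (fun g : G => ((μ {F | F (1, g) = true}).toReal : ℂ)) ≤ 2 :=
  stmt3_general μ hforest hinv
end

section
/- Let G be a group and H < G a subgroup. Then the canonical inclusion ℂ[H] → ℂ[G] (extension by zero) is isometric for the T¹ norms: for every finitely supported f : H → ℂ, ‖f‖_{T¹(G)} = ‖f‖_{T¹(H)}. -/
open ENNReal

open scoped Classical in
/-- Auxiliary: summing a function supported on the coset `gH`, reparametrized by `H`. -/
theorem tsum_dite_coset {G : Type*} [Group G] (H : Subgroup G) (g : G) (b : H → ℝ≥0∞) :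
    ∑' g' : G, (if hm : g⁻¹ * g' ∈ H then b ⟨g⁻¹ * g', hm⟩ else 0) = ∑' h : H, b h := by
  rw [← (Equiv.mulLeft g).tsum_eq]
  have h1 : ∀ x : G, (if hm : g⁻¹ * (Equiv.mulLeft g x) ∈ H then b ⟨g⁻¹ * (Equiv.mulLeft g x), hm⟩
      else 0) = (if hx : x ∈ H then b ⟨x, hx⟩ else 0) := by
    intro x
    by_cases hx : x ∈ H
    · have hm : g⁻¹ * (Equiv.mulLeft g x) ∈ H := by simpa using hx
      rw [dif_pos hm, dif_pos hx]
      congr 1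
      apply Subtype.ext
      simp
    · have hm : ¬ (g⁻¹ * (Equiv.mulLeft g x) ∈ H) := by simpa using hx
      rw [dif_neg hm, dif_neg hx]
  rw [tsum_congr h1]
  have hsupp : Function.support (fun x : G => if hx : x ∈ H then b ⟨x, hx⟩ else 0)
      ⊆ (H : Set G) := by
    intro x hx
    by_contra hxH
    exact hx (dif_neg hxH)
  rw [← tsum_subtype_eq_of_support_subset hsupp]
  have h2 : ∀ x : (H : Set G), (if hx : (x : G) ∈ H then b ⟨(x : G), hx⟩ else 0) = b ⟨x.1, x.2⟩ :=
    fun x => dif_pos x.2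
  rw [tsum_congr h2]
  exact (Equiv.subtypeEquivRight (fun x => Iff.rfl)).tsum_eq b

open scoped Classical in
/-- the canonical inclusion `ℂ[H] → ℂ[G]` (extension by zero) is isometric for
the `T¹`-norms. -/
theorem stmt4 {G : Type*} [Group G] (H : Subgroup G) (f : H → ℂ)
    (hf : (Function.support f).Finite) :
    T1norm (fun g : G => if h : g ∈ H then f ⟨g, h⟩ else 0) = T1norm f := by
  -- "position in coset" map
  have memσ : ∀ g : G, (Quotient.out (QuotientGroup.mk g : G ⧸ H))⁻¹ * g ∈ H := fun g =>
    QuotientGroup.eq.mp (QuotientGroup.out_eq' (QuotientGroup.mk g))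
  set σ : G → H := fun g => ⟨(Quotient.out (QuotientGroup.mk g : G ⧸ H))⁻¹ * g, memσ g⟩
    with hσ
  have hout : ∀ (g x : G), x ∈ H →
      Quotient.out (QuotientGroup.mk (g * x) : G ⧸ H) =
        Quotient.out (QuotientGroup.mk g : G ⧸ H) := by
    intro g x hx
    have : (QuotientGroup.mk (g * x) : G ⧸ H) = QuotientGroup.mk g := by
      symm; exact QuotientGroup.eq.mpr (by simpa using hx)
    rw [this]
  have hσmul : ∀ (g : G) (h : H), σ (g * h) = σ g * h := by
    intro g h
    apply Subtype.ext
    simp only [hσ, Submonoid.coe_mul, Subgroup.coe_toSubmonoid]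
    rw [hout g h h.2]
    push_cast
    rw [mul_assoc]
  have hσrel : ∀ (g g' : G) (hm : g⁻¹ * g' ∈ H), σ g' = σ g * ⟨g⁻¹ * g', hm⟩ := by
    intro g g' hm
    have h2 := hσmul g ⟨g⁻¹ * g', hm⟩
    have h3 : g * ((⟨g⁻¹ * g', hm⟩ : H) : G) = g' := by simp
    rw [h3] at h2
    exact h2
  apply le_antisymm
  · -- hard direction : extend a decomposition on H to G
    simp only [T1norm]
    refine le_iInf₂ fun e he => ?_
    refine iInf₂_le_of_le
      (fun p => if hm : p.1⁻¹ * p.2 ∈ H then e.1 (σ p.1, σ p.2) else 0,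
       fun p => if hm : p.1⁻¹ * p.2 ∈ H then e.2 (σ p.1, σ p.2) else 0) ?_ ?_
    · intro g g'
      by_cases hm : g⁻¹ * g' ∈ H
      · simp only [dif_pos hm]
        have hq : (σ g)⁻¹ * σ g' = ⟨g⁻¹ * g', hm⟩ := by
          rw [hσrel g g' hm]
          group
        have := he (σ g) (σ g')
        rw [hq] at this
        exact this
      · simp only [dif_neg hm, add_zero]
    · -- sums
      gcongr
      · refine iSup_le fun g => ?_
        refine le_trans (le_of_eq ?_) (le_iSup _ (σ g))
        have h1 : ∀ g' : G, ENNReal.ofReal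
            ‖if hm : g⁻¹ * g' ∈ H then e.1 (σ g, σ g') else 0‖ =
            (if hm : g⁻¹ * g' ∈ H then
              (fun h : H => ENNReal.ofReal ‖e.1 (σ g, σ g * h)‖) ⟨g⁻¹ * g', hm⟩ else 0) := by
          intro g'
          by_cases hm : g⁻¹ * g' ∈ H
          · rw [dif_pos hm, dif_pos hm, hσrel g g' hm]
          · rw [dif_neg hm, dif_neg hm]
            simp
        rw [tsum_congr h1, tsum_dite_coset H g (fun h : H => ENNReal.ofReal ‖e.1 (σ g, σ g * h)‖)]
        exact (Equiv.mulLeft (σ g)).tsum_eq (fun h' : H => ENNReal.ofReal ‖e.1 (σ g, h')‖)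
      · refine iSup_le fun g => ?_
        refine le_trans (le_of_eq ?_) (le_iSup _ (σ g))
        have h1 : ∀ g' : G, ENNReal.ofReal
            ‖if hm : g'⁻¹ * g ∈ H then e.2 (σ g', σ g) else 0‖ =
            (if hm : g⁻¹ * g' ∈ H then
              (fun h : H => ENNReal.ofReal ‖e.2 (σ g * h, σ g)‖) ⟨g⁻¹ * g', hm⟩ else 0) := by
          intro g'
          by_cases hm : g⁻¹ * g' ∈ H
          · have hm' : g'⁻¹ * g ∈ H := by
              have := inv_mem hm; simpa using this
            rw [dif_pos hm', dif_pos hm, hσrel g g' hm]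
          · have hm' : ¬ (g'⁻¹ * g ∈ H) := by
              intro h; apply hm
              have := inv_mem h; simpa using this
            rw [dif_neg hm', dif_neg hm]
            simp
        rw [tsum_congr h1, tsum_dite_coset H g (fun h : H => ENNReal.ofReal ‖e.2 (σ g * h, σ g)‖)]
        exact (Equiv.mulLeft (σ g)).tsum_eq (fun h' : H => ENNReal.ofReal ‖e.2 (h', σ g)‖)
  · -- easy direction : restrict a decomposition on G to H
    simp only [T1norm]
    refine le_iInf₂ fun d hd => ?_
    refine iInf₂_le_of_le
      (fun p => d.1 ((p.1 : G), (p.2 : G)), fun p => d.2 ((p.1 : G), (p.2 : G))) ?_ ?_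
    · intro h h'
      have hm : (h : G)⁻¹ * (h' : G) ∈ H := mul_mem (inv_mem h.2) h'.2
      have := hd (h : G) (h' : G)
      simp only [dif_pos hm] at this
      have hco : (⟨(h : G)⁻¹ * (h' : G), hm⟩ : H) = h⁻¹ * h' := by
        apply Subtype.ext; simp
      rw [hco] at this
      exact this
    · gcongr
      · refine iSup_le fun h => ?_
        refine le_trans ?_ (le_iSup _ (h : G))
        exact ENNReal.tsum_comp_le_tsum_of_injective Subtype.val_injective
          (fun g' => ENNReal.ofReal ‖d.1 ((h : G), g')‖)
      · refine iSup_le fun h => ?_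
        refine le_trans ?_ (le_iSup _ (h : G))
        exact ENNReal.tsum_comp_le_tsum_of_injective Subtype.val_injective
          (fun g' => ENNReal.ofReal ‖d.2 (g', (h : G))‖)
end

section
/- Let E be a finite set with a fixpoint-free involution e ↦ ē, let ℓ²_alt(E) be the space of real functions ψ on E with ψ(ē) = −ψ(e), and for e ∈ E let χ_e = δ_e − δ_{ē}. Let W ⊆ ℓ²_alt(E) be a linear subspace, and let f = π_W(χ_e) be the orthogonal projection of χ_e onto W, where f ∈ ℓ²_alt(E). Then f(e) ≥ 0. -/
/-!
The projection `f = π_W χ_e` satisfies `⟪f, χ_e⟫ = ⟪f, f⟫ ≥ 0` because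
`χ_e − f ⊥ W`, while for any alternating `f` one has `⟪f, χ_e⟫ = f(e) − f(ē) = 2 f(e)`.
-/

open scoped RealInnerProductSpace

theorem inner_toLp_signedIndicator {E : Type*} [Fintype E] [DecidableEq E]
    (bar : E → E) (e : E) (ψ : EuclideanSpace ℝ E) (hψ : ψ (bar e) = -ψ e) :
    ⟪ψ, WithLp.toLp 2 (fun x => if x = e then 1 else if x = bar e then -1 else 0)⟫ = 2 * ψ e := by
  simp only [PiLp.inner_apply, RCLike.inner_apply, conj_trivial]
  by_cases hfix : bar e = e
  · -- an alternating function vanishes at a fixed point of `bar`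
    have hψe : ψ e = 0 := by rw [hfix] at hψ; linarith
    rw [Fintype.sum_eq_single e fun x hx => by simp [hfix, hx]]
    simp [hψe]
  · rw [Fintype.sum_eq_add e (bar e) (Ne.symm hfix) fun x ⟨hxe, hxb⟩ => by simp [hxe, hxb]]
    simp [hfix, hψ]
    ring

theorem Submodule.real_inner_orthogonalProjectionOnto_self_nonneg {F : Type*}
    [NormedAddCommGroup F] [InnerProductSpace ℝ F] (K : Submodule ℝ F)
    [K.HasOrthogonalProjection] (v : F) :
    0 ≤ ⟪(K.orthogonalProjectionOnto v : F), v⟫ := by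
  rw [← K.inner_orthogonalProjectionOnto_eq_of_mem_left]
  exact real_inner_self_nonneg

theorem stmt8_general {E : Type*} [Fintype E] [DecidableEq E]
    (bar : E → E)
    (W : Submodule ℝ (EuclideanSpace ℝ E)) (hW : ∀ ψ ∈ W, ∀ x, ψ (bar x) = -ψ x)
    (e : E) (χ : EuclideanSpace ℝ E)
    (hχ : χ = WithLp.toLp 2 (fun x => if x = e then 1 else if x = bar e then -1 else 0)) :
    0 ≤ (W.orthogonalProjectionOnto χ : EuclideanSpace ℝ E) e := by
  set f : EuclideanSpace ℝ E := (W.orthogonalProjectionOnto χ : EuclideanSpace ℝ E)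
  have hinner : ⟪f, χ⟫ = 2 * f e :=
    hχ ▸ inner_toLp_signedIndicator bar e f (hW f (W.orthogonalProjectionOnto χ).2 e)
  have hpos : 0 ≤ ⟪f, χ⟫ := W.real_inner_orthogonalProjectionOnto_self_nonneg χ
  linarith

/-- for a finite set `E` with a fixpoint-free involution, a subspace `W` of the
alternating functions, and `χ_e = δ_e − δ_{ē}`, the orthogonal projection `f = π_W(χ_e)`
satisfies `f(e) ≥ 0`. -/
theorem stmt8 {E : Type*} [Fintype E] [DecidableEq E]
    (bar : E → E) (hinv : ∀ e, bar (bar e) = e) (hfpf : ∀ e, bar e ≠ e)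
    (W : Submodule ℝ (EuclideanSpace ℝ E)) (hW : ∀ ψ ∈ W, ∀ x, ψ (bar x) = -ψ x)
    (e : E) (χ : EuclideanSpace ℝ E)
    (hχ : χ = WithLp.toLp 2 (fun x => if x = e then 1 else if x = bar e then -1 else 0)) :
    0 ≤ (W.orthogonalProjectionOnto χ : EuclideanSpace ℝ E) e :=
  stmt8_general bar W hW e χ hχ
end
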